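/- Let n ≥ 1, let Ω ⊂ ℝⁿ be open and bounded, and let E ⊂ ℝⁿ be measurable with Per_{s₀}(E,Ω) < ∞ for some s₀ ∈ (0,1/2). Suppose the limit Ξ_E = lim_{s→0⁺} s · Λ_E(x, r, s) exists for some (hence all) x ∈ ℝⁿ and r > 0. Then lim_{s→0⁺} s · Per_s(E,Ω) exists and equals 2[(1 − Ξ_E) 𝓛ⁿ(E ∩ Ω) + Ξ_E 𝓛ⁿ(E^c ∩ Ω)]. -/

import Mathlib

open MeasureTheory Real Filter Topology Set
open scoped ENNReal

noncomputable def heatKernel (n : ℕ) (t : ℝ) (x y : EuclideanSpace ℝ (Fin n)) : ℝ :=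
  (4 * π * t) ^ (-(n : ℝ) / 2) * Real.exp (-‖x - y‖ ^ 2 / (4 * t))

/-- `L_s(A,B) = ∫₀^∞ t^{-(1+s)} ∫_A ∫_B p_t(x,y) dy dx dt`. -/
noncomputable def Lfun (n : ℕ) (s : ℝ) (A B : Set (EuclideanSpace ℝ (Fin n))) : ℝ≥0∞ :=
  ∫⁻ t in Set.Ioi (0:ℝ), ENNReal.ofReal (t ^ (-(1 + s))) *
    ∫⁻ x in A, ∫⁻ y in B, ENNReal.ofReal (heatKernel n t x y)

/-- The relative `s`-perimeter
`Per_s(E,Ω) = 2[L_s(E∩Ω, Eᶜ∩Ω) + L_s(E∩Ω, Eᶜ∩Ωᶜ) + L_s(E∩Ωᶜ, Eᶜ∩Ω)]`. -/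
noncomputable def sPer (n : ℕ) (s : ℝ) (E Ω : Set (EuclideanSpace ℝ (Fin n))) : ℝ≥0∞ :=
  2 * (Lfun n s (E ∩ Ω) (Eᶜ ∩ Ω) + Lfun n s (E ∩ Ω) (Eᶜ ∩ Ωᶜ) + Lfun n s (E ∩ Ωᶜ) (Eᶜ ∩ Ω))

/-- `Λ_E(x,r,s) = ∫₁^∞ t^{-(1+s)} ∫_{E \ B(x,r)} p_t(x,y) dy dt`. -/
noncomputable def LambdaE (n : ℕ) (E : Set (EuclideanSpace ℝ (Fin n)))
    (x : EuclideanSpace ℝ (Fin n)) (r s : ℝ) : ℝ≥0∞ :=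
  ∫⁻ t in Set.Ioi (1:ℝ), ENNReal.ofReal (t ^ (-(1 + s))) *
    ∫⁻ y in E \ Metric.ball x r, ENNReal.ofReal (heatKernel n t x y)

/-!
Split the time integral in `L_s` at `t = 1`. On `(0, 1]` we have `t^{-(1+s)} ≤ t^{-(1+s₀)}` for
`s ≤ s₀`, so finiteness of `Per_{s₀}(E, Ω)` bounds that part and it disappears after multiplying
by `s`. On `(1, ∞)` the weights `s t^{-(1+s)}` form a probability density that escapes to infinity
as `s → 0⁺`, and errors of size `t^{-1/2}` average out to `O(s)`. For large `t` we have
`p_t ≤ t^{-n/2} ≤ t^{-1/2}`, and `p_t(x', ·)` is `O(|x - x'| t^{-1/2})`-close to `p_t(x, ·)`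
in `L¹`. Hence the ball in `Λ_E` is irrelevant and `s ∫₁^∞ t^{-(1+s)} ∫_E p_t(x', y) dy dt → Ξ_E`
for every `x'`; by dominated convergence the interaction of a set `W` of finite measure with `E`
tends to `Ξ_E |W|`. Since `p_t(x', ·)` has mass one, the interaction of `E ∩ Ω` with `Eᶜ` tends
to `(1 - Ξ_E) |E ∩ Ω|`, and the interaction of `Eᶜ ∩ Ω` with `E \ Ω` differs from that with all
of `E` by at most `|Ω|² t^{-1/2}`.
-/

section HeatKernel

variable {n : ℕ} {t : ℝ}

lemma heatKernel_comm (n : ℕ) (t : ℝ) (x y : EuclideanSpace ℝ (Fin n)) :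
    heatKernel n t x y = heatKernel n t y x := by
  rw [heatKernel, heatKernel, norm_sub_rev]

lemma heatKernel_nonneg (ht : 0 ≤ t) (x y : EuclideanSpace ℝ (Fin n)) :
    0 ≤ heatKernel n t x y := by
  unfold heatKernel; positivity

@[fun_prop]
lemma Measurable.heatKernel {α : Type*} [MeasurableSpace α] {f : α → ℝ}
    {g h : α → EuclideanSpace ℝ (Fin n)} (hf : Measurable f) (hg : Measurable g)
    (hh : Measurable h) : Measurable fun a => heatKernel n (f a) (g a) (h a) := by
  unfold _root_.heatKernel; fun_prop

lemma heatKernel_eq_mul_exp (t : ℝ) (x y : EuclideanSpace ℝ (Fin n)) :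
    heatKernel n t x y = (4 * π * t) ^ (-(n : ℝ) / 2) * rexp (-(1 / (4 * t)) * ‖x - y‖ ^ 2) := by
  rw [heatKernel]; ring_nf

lemma lintegral_exp_neg_mul_norm_sub_sq {b : ℝ} (hb : 0 < b) (x : EuclideanSpace ℝ (Fin n)) :
    ∫⁻ y, ENNReal.ofReal (rexp (-b * ‖x - y‖ ^ 2)) =
      ENNReal.ofReal ((π / b) ^ ((n : ℝ) / 2)) := by
  have h := GaussianFourier.integral_rexp_neg_mul_sq_norm (V := EuclideanSpace ℝ (Fin n)) hb
  rw [finrank_euclideanSpace_fin] at h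
  -- integrability for free: a non-integrable function would have integral `0`
  have hint := Integrable.of_integral_ne_zero (h ▸ (by positivity : (π / b) ^ ((n : ℝ) / 2) ≠ 0))
  simp_rw [norm_sub_rev x]
  rw [lintegral_sub_right_eq_self (fun y => ENNReal.ofReal (rexp (-b * ‖y‖ ^ 2))) x,
    ← ofReal_integral_eq_lintegral_ofReal hint (ae_of_all _ fun _ => (exp_pos _).le), h]

lemma lintegral_heatKernel (ht : 0 < t) (x : EuclideanSpace ℝ (Fin n)) :
    ∫⁻ y, ENNReal.ofReal (heatKernel n t x y) = 1 := by
  simp_rw [heatKernel_eq_mul_exp,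
    ENNReal.ofReal_mul (by positivity : (0 : ℝ) ≤ (4 * π * t) ^ (-(n : ℝ) / 2))]
  rw [lintegral_const_mul _ (by fun_prop), lintegral_exp_neg_mul_norm_sub_sq (by positivity),
    ← ENNReal.ofReal_mul (by positivity), show π / (1 / (4 * t)) = 4 * π * t by field_simp,
    ← Real.rpow_add (by positivity), neg_div, neg_add_cancel, Real.rpow_zero, ENNReal.ofReal_one]

lemma heatKernel_le_inv_sqrt (hn : 1 ≤ n) (ht : 1 ≤ t) (x y : EuclideanSpace ℝ (Fin n)) :
    heatKernel n t x y ≤ (√t)⁻¹ := by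
  have h4πt : 1 ≤ 4 * π * t := by nlinarith [pi_gt_three]
  calc heatKernel n t x y ≤ (4 * π * t) ^ (-(n : ℝ) / 2) := by
        rw [heatKernel]
        refine mul_le_of_le_one_right (by positivity) (exp_le_one_iff.2 ?_)
        exact div_nonpos_of_nonpos_of_nonneg (by simp) (by linarith)
    _ ≤ (4 * π * t) ^ (-(1 / 2) : ℝ) := by
        apply Real.rpow_le_rpow_of_exponent_le h4πt
        have : (1 : ℝ) ≤ n := by exact_mod_cast hn
        linarith
    _ ≤ t ^ (-(1 / 2) : ℝ) :=
        rpow_le_rpow_of_nonpos (by linarith) (by nlinarith [pi_gt_three]) (by norm_num)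
    _ = (√t)⁻¹ := by rw [Real.rpow_neg (by linarith), Real.sqrt_eq_rpow]

lemma mul_exp_neg_sq_le (ht : 0 < t) (u : ℝ) : u * rexp (-(1 / (8 * t)) * u ^ 2) ≤ √(2 * t) := by
  set a := √(2 * t)
  have ha : 0 < a := by positivity
  have h8t : 8 * t = 4 * a ^ 2 := by rw [Real.sq_sqrt (by positivity)]; ring
  have hu : u ≤ a * (u ^ 2 / (8 * t) + 1) := by
    rw [h8t, mul_add, mul_div_assoc', div_add' _ _ _ (by positivity), le_div_iff₀ (by positivity)]
    nlinarith [sq_nonneg (u - 2 * a)]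
  calc u * rexp (-(1 / (8 * t)) * u ^ 2)
      ≤ a * rexp (u ^ 2 / (8 * t)) * rexp (-(1 / (8 * t)) * u ^ 2) := by
        gcongr; exact hu.trans (by gcongr; exact add_one_le_exp _)
    _ = a := by rw [mul_assoc, ← exp_add, div_eq_inv_mul, one_div, neg_mul, add_neg_cancel,
          exp_zero, mul_one]

lemma norm_sub_mul_heatKernel_le (ht : 0 < t) (x y : EuclideanSpace ℝ (Fin n)) :
    ‖x - y‖ * heatKernel n t x y ≤
      √(2 * t) * (4 * π * t) ^ (-(n : ℝ) / 2) * rexp (-(1 / (8 * t)) * ‖x - y‖ ^ 2) := by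
  have hsplit : rexp (-(1 / (4 * t)) * ‖x - y‖ ^ 2) =
      rexp (-(1 / (8 * t)) * ‖x - y‖ ^ 2) * rexp (-(1 / (8 * t)) * ‖x - y‖ ^ 2) := by
    rw [← exp_add]; congr 1; field_simp; ring
  rw [heatKernel_eq_mul_exp, hsplit]
  have := mul_le_mul_of_nonneg_right (mul_exp_neg_sq_le ht ‖x - y‖)
    (by positivity : 0 ≤ (4 * π * t) ^ (-(n : ℝ) / 2) * rexp (-(1 / (8 * t)) * ‖x - y‖ ^ 2))
  linarith

lemma lintegral_norm_sub_mul_heatKernel_le (ht : 0 < t) (x : EuclideanSpace ℝ (Fin n)) :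
    ∫⁻ y, ENNReal.ofReal (‖x - y‖ * heatKernel n t x y) ≤
      ENNReal.ofReal (2 ^ ((n : ℝ) / 2) * √(2 * t)) := by
  have hc : 0 ≤ √(2 * t) * (4 * π * t) ^ (-(n : ℝ) / 2) := by positivity
  calc ∫⁻ y, ENNReal.ofReal (‖x - y‖ * heatKernel n t x y)
      ≤ ∫⁻ y, ENNReal.ofReal (√(2 * t) * (4 * π * t) ^ (-(n : ℝ) / 2)) *
          ENNReal.ofReal (rexp (-(1 / (8 * t)) * ‖x - y‖ ^ 2)) := by
        gcongr with y
        rw [← ENNReal.ofReal_mul hc]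
        exact ENNReal.ofReal_le_ofReal (norm_sub_mul_heatKernel_le ht x y)
    _ = ENNReal.ofReal (2 ^ ((n : ℝ) / 2) * √(2 * t)) := by
        have hpow : (4 * π * t) ^ (-(n : ℝ) / 2) * (2 * (4 * π * t)) ^ ((n : ℝ) / 2) =
            2 ^ ((n : ℝ) / 2) := by
          rw [Real.mul_rpow (x := 2) (by norm_num) (by positivity), mul_left_comm,
            ← Real.rpow_add (by positivity), neg_div, neg_add_cancel, Real.rpow_zero, mul_one]
        rw [lintegral_const_mul _ (by fun_prop), lintegral_exp_neg_mul_norm_sub_sq (by positivity),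
          ← ENNReal.ofReal_mul hc, show π / (1 / (8 * t)) = 2 * (4 * π * t) by field_simp; ring,
          mul_assoc, hpow, mul_comm]

lemma exp_le_exp_add_sub_mul (a b : ℝ) : rexp a ≤ rexp b + (a - b) * rexp a := by
  have h := mul_le_mul_of_nonneg_left (add_one_le_exp (b - a)) (exp_pos a).le
  rw [← exp_add, add_sub_cancel] at h
  linarith

lemma heatKernel_le_heatKernel_add (ht : 0 < t) (x x' y : EuclideanSpace ℝ (Fin n)) :
    heatKernel n t x' y ≤ heatKernel n t x y +
      ‖x - x'‖ * (2 * ‖x' - y‖ + ‖x - x'‖) / (4 * t) * heatKernel n t x' y := by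
  have hdist : ‖x - y‖ ≤ ‖x - x'‖ + ‖x' - y‖ := norm_sub_le_norm_sub_add_norm_sub x x' y
  have hexp : -‖x' - y‖ ^ 2 / (4 * t) - -‖x - y‖ ^ 2 / (4 * t) ≤
      ‖x - x'‖ * (2 * ‖x' - y‖ + ‖x - x'‖) / (4 * t) := by
    rw [div_sub_div_same]
    gcongr
    nlinarith [norm_nonneg (x - y)]
  unfold heatKernel
  calc (4 * π * t) ^ (-(n : ℝ) / 2) * rexp (-‖x' - y‖ ^ 2 / (4 * t))
      ≤ (4 * π * t) ^ (-(n : ℝ) / 2) * rexp (-‖x - y‖ ^ 2 / (4 * t)) +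
          (-‖x' - y‖ ^ 2 / (4 * t) - -‖x - y‖ ^ 2 / (4 * t)) *
            ((4 * π * t) ^ (-(n : ℝ) / 2) * rexp (-‖x' - y‖ ^ 2 / (4 * t))) := by
        have := mul_le_mul_of_nonneg_left (exp_le_exp_add_sub_mul (-‖x' - y‖ ^ 2 / (4 * t))
          (-‖x - y‖ ^ 2 / (4 * t))) (by positivity : (0 : ℝ) ≤ (4 * π * t) ^ (-(n : ℝ) / 2))
        linarith
    _ ≤ _ := by gcongr

lemma div_mul_sqrt_add_sq_div_le {c R : ℝ} (ht : 1 ≤ t) (hc : 0 ≤ c) (hR : 0 ≤ R) :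
    R / (2 * t) * (c * √(2 * t)) + R ^ 2 / (4 * t) ≤ R * (c * √2 + R) * (√t)⁻¹ := by
  have hq : 1 ≤ √t := Real.one_le_sqrt.2 ht
  rw [Real.sqrt_mul zero_le_two, ← Real.sq_sqrt (zero_le_one.trans ht)]
  generalize √t = q at hq ⊢
  rw [Real.sqrt_sq (by linarith)]
  field_simp
  nlinarith [mul_nonneg (mul_nonneg hR hR) (by linarith : (0 : ℝ) ≤ q - 1),
    mul_nonneg (mul_nonneg (mul_nonneg hR hc) (Real.sqrt_nonneg 2)) (by linarith : (0 : ℝ) ≤ q)]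

lemma setLIntegral_heatKernel_le_add (ht : 1 ≤ t) (x x' : EuclideanSpace ℝ (Fin n))
    (S : Set (EuclideanSpace ℝ (Fin n))) :
    ∫⁻ y in S, ENNReal.ofReal (heatKernel n t x' y) ≤
      (∫⁻ y in S, ENNReal.ofReal (heatKernel n t x y)) +
        ENNReal.ofReal (‖x - x'‖ * (2 ^ ((n : ℝ) / 2) * √2 + ‖x - x'‖)) *
          ENNReal.ofReal (√t)⁻¹ := by
  have ht0 : 0 < t := by linarith
  set R := ‖x - x'‖
  have hR : 0 ≤ R := norm_nonneg _
  have hpt : ∀ y, ENNReal.ofReal (heatKernel n t x' y) ≤ ENNReal.ofReal (heatKernel n t x y) +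
      (ENNReal.ofReal (R / (2 * t)) * ENNReal.ofReal (‖x' - y‖ * heatKernel n t x' y) +
        ENNReal.ofReal (R ^ 2 / (4 * t)) * ENNReal.ofReal (heatKernel n t x' y)) := fun y => by
    have := heatKernel_nonneg (n := n) ht0.le x' y
    rw [← ENNReal.ofReal_mul (by positivity), ← ENNReal.ofReal_mul (by positivity),
      ← ENNReal.ofReal_add (by positivity) (by positivity),
      ← ENNReal.ofReal_add (heatKernel_nonneg ht0.le x y) (by positivity)]
    refine ENNReal.ofReal_le_ofReal ((heatKernel_le_heatKernel_add ht0 x x' y).trans_eq ?_)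
    field_simp
    ring
  calc ∫⁻ y in S, ENNReal.ofReal (heatKernel n t x' y)
      ≤ (∫⁻ y in S, ENNReal.ofReal (heatKernel n t x y)) +
          ∫⁻ y, (ENNReal.ofReal (R / (2 * t)) * ENNReal.ofReal (‖x' - y‖ * heatKernel n t x' y) +
            ENNReal.ofReal (R ^ 2 / (4 * t)) * ENNReal.ofReal (heatKernel n t x' y)) := by
        refine (lintegral_mono hpt).trans ?_
        rw [lintegral_add_left (by fun_prop)]
        gcongr
        exact Measure.restrict_le_self
    _ ≤ (∫⁻ y in S, ENNReal.ofReal (heatKernel n t x y)) +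
          (ENNReal.ofReal (R / (2 * t)) * ENNReal.ofReal (2 ^ ((n : ℝ) / 2) * √(2 * t)) +
            ENNReal.ofReal (R ^ 2 / (4 * t))) := by
        rw [lintegral_add_left (by fun_prop), lintegral_const_mul _ (by fun_prop),
          lintegral_const_mul _ (by fun_prop), lintegral_heatKernel ht0, mul_one]
        gcongr
        exact lintegral_norm_sub_mul_heatKernel_le ht0 x'
    _ ≤ _ := by
        gcongr
        rw [← ENNReal.ofReal_mul (by positivity),
          ← ENNReal.ofReal_add (by positivity) (by positivity),
          ← ENNReal.ofReal_mul (by positivity)]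
        exact ENNReal.ofReal_le_ofReal (div_mul_sqrt_add_sq_div_le ht (by positivity) hR)

end HeatKernel

section TailMean

noncomputable def tailMean (f : ℝ → ℝ≥0∞) (s : ℝ) : ℝ≥0∞ :=
  ENNReal.ofReal s * ∫⁻ t in Ioi 1, ENNReal.ofReal (t ^ (-(1 + s))) * f t

variable {f g : ℝ → ℝ≥0∞} {s : ℝ}

lemma lintegral_Ioi_one_rpow_neg {a : ℝ} (ha : 0 < a) :
    ∫⁻ t in Ioi 1, ENNReal.ofReal (t ^ (-(1 + a))) = ENNReal.ofReal a⁻¹ := by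
  rw [← ofReal_integral_eq_lintegral_ofReal (integrableOn_Ioi_rpow_of_lt (by linarith) one_pos)
    ((ae_restrict_iff' measurableSet_Ioi).2 (ae_of_all _ fun t ht =>
      Real.rpow_nonneg (zero_le_one.trans (le_of_lt ht)) _)),
    integral_Ioi_rpow_of_lt (by linarith) one_pos, Real.one_rpow]
  ring_nf

lemma tailMean_mono (hfg : ∀ t, 1 < t → f t ≤ g t) : tailMean f s ≤ tailMean g s := by
  unfold tailMean
  exact mul_le_mul_right (setLIntegral_mono' measurableSet_Ioi fun t ht =>
    mul_le_mul_right (hfg t ht) _) _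

lemma tailMean_congr (hfg : ∀ t, 1 < t → f t = g t) : tailMean f s = tailMean g s :=
  (tailMean_mono fun t ht => (hfg t ht).le).antisymm (tailMean_mono fun t ht => (hfg t ht).ge)

lemma tailMean_add (hg : Measurable g) :
    tailMean (fun t => f t + g t) s = tailMean f s + tailMean g s := by
  simp only [tailMean, mul_add]
  rw [lintegral_add_right _ (by fun_prop), mul_add]

lemma tailMean_const_mul (hf : Measurable f) (c : ℝ≥0∞) :
    tailMean (fun t => c * f t) s = c * tailMean f s := by
  simp only [tailMean, mul_left_comm _ c]
  rw [lintegral_const_mul _ (by fun_prop), mul_left_comm]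

lemma tailMean_const (hs : 0 < s) (c : ℝ≥0∞) : tailMean (fun _ => c) s = c := by
  rw [tailMean, lintegral_mul_const _ (by fun_prop), lintegral_Ioi_one_rpow_neg hs, ← mul_assoc,
    ← ENNReal.ofReal_mul hs.le, mul_inv_cancel₀ hs.ne', ENNReal.ofReal_one, one_mul]

lemma tendsto_tailMean_inv_sqrt :
    Tendsto (tailMean fun t => ENNReal.ofReal (√t)⁻¹) (𝓝[>] 0) (𝓝 0) := by
  have hcont : Tendsto (fun s : ℝ => ENNReal.ofReal (s * (s + 1 / 2)⁻¹)) (𝓝[>] 0) (𝓝 0) := by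
    have h : ContinuousAt (fun s : ℝ => s * (s + 1 / 2)⁻¹) 0 := by fun_prop (disch := norm_num)
    simpa using tendsto_nhdsWithin_of_tendsto_nhds (ENNReal.tendsto_ofReal h.tendsto)
  refine hcont.congr' (eventually_nhdsWithin_of_forall fun s (hs : 0 < s) => ?_)
  have hpow : ∀ t ∈ Ioi (1 : ℝ), ENNReal.ofReal (t ^ (-(1 + s))) * ENNReal.ofReal (√t)⁻¹ =
      ENNReal.ofReal (t ^ (-(1 + (s + 1 / 2)))) := fun t (ht : 1 < t) => by
    rw [← ENNReal.ofReal_mul (by positivity), Real.sqrt_eq_rpow, ← Real.rpow_neg (by linarith),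
      ← Real.rpow_add (by linarith)]
    ring_nf
  rw [tailMean, setLIntegral_congr_fun measurableSet_Ioi hpow,
    lintegral_Ioi_one_rpow_neg (by linarith), ← ENNReal.ofReal_mul hs.le]

lemma tendsto_tailMean_of_le_add {L C : ℝ≥0∞} (hC : C ≠ ⊤)
    (hg : Tendsto (tailMean g) (𝓝[>] 0) (𝓝 L))
    (hfg : ∀ t, 1 < t → f t ≤ g t + C * ENNReal.ofReal (√t)⁻¹)
    (hgf : ∀ t, 1 < t → g t ≤ f t + C * ENNReal.ofReal (√t)⁻¹) :
    Tendsto (tailMean f) (𝓝[>] 0) (𝓝 L) := by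
  have hmeas : Measurable fun t : ℝ => C * ENNReal.ofReal (√t)⁻¹ := by fun_prop
  set ε := tailMean fun t => ENNReal.ofReal (√t)⁻¹
  have herr : Tendsto (fun s => C * ε s) (𝓝[>] 0) (𝓝 0) := by
    simpa using ENNReal.Tendsto.const_mul tendsto_tailMean_inv_sqrt (Or.inr hC)
  have hle : ∀ {u v : ℝ → ℝ≥0∞}, (∀ t, 1 < t → u t ≤ v t + C * ENNReal.ofReal (√t)⁻¹) →
      ∀ s, tailMean u s ≤ tailMean v s + C * ε s :=
    fun huv s => (tailMean_mono huv).trans_eq <| by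
      rw [tailMean_add hmeas, tailMean_const_mul (by fun_prop)]
  refine tendsto_of_tendsto_of_tendsto_of_le_of_le (g := fun s => tailMean g s - C * ε s)
    (h := fun s => tailMean g s + C * ε s) ?_ ?_ (fun s => ?_) (fun s => hle hfg s)
  · simpa using ENNReal.Tendsto.sub hg herr (Or.inr ENNReal.zero_ne_top)
  · simpa using hg.add herr
  · exact tsub_le_iff_right.2 (hle hgf s)

end TailMean

section HeatMass

variable {n : ℕ} {t : ℝ}

noncomputable def heatMass (n : ℕ) (t : ℝ) (A B : Set (EuclideanSpace ℝ (Fin n))) : ℝ≥0∞ :=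
  ∫⁻ x in A, ∫⁻ y in B, ENNReal.ofReal (heatKernel n t x y)

@[fun_prop]
lemma Measurable.setLIntegral_heatKernel {α : Type*} [MeasurableSpace α] {f : α → ℝ}
    {g : α → EuclideanSpace ℝ (Fin n)} (hf : Measurable f) (hg : Measurable g)
    (B : Set (EuclideanSpace ℝ (Fin n))) :
    Measurable fun a => ∫⁻ y in B, ENNReal.ofReal (_root_.heatKernel n (f a) (g a) y) :=
  Measurable.lintegral_prod_right' (f := fun q : α × EuclideanSpace ℝ (Fin n) =>
    ENNReal.ofReal (_root_.heatKernel n (f q.1) (g q.1) q.2)) (by fun_prop)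

lemma measurable_heatMass (A B : Set (EuclideanSpace ℝ (Fin n))) :
    Measurable fun t => heatMass n t A B :=
  Measurable.lintegral_prod_right' (f := fun q : ℝ × EuclideanSpace ℝ (Fin n) =>
    ∫⁻ y in B, ENNReal.ofReal (heatKernel n q.1 q.2 y)) (by fun_prop)

lemma setLIntegral_heatKernel_le (hn : 1 ≤ n) (ht : 1 ≤ t) (x : EuclideanSpace ℝ (Fin n))
    (B : Set (EuclideanSpace ℝ (Fin n))) :
    ∫⁻ y in B, ENNReal.ofReal (heatKernel n t x y) ≤ volume B * ENNReal.ofReal (√t)⁻¹ :=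
  (lintegral_mono fun y => ENNReal.ofReal_le_ofReal (heatKernel_le_inv_sqrt hn ht x y)).trans_eq
    (by rw [setLIntegral_const, mul_comm])

lemma heatMass_comm (n : ℕ) (t : ℝ) (A B : Set (EuclideanSpace ℝ (Fin n))) :
    heatMass n t A B = heatMass n t B A := by
  rw [heatMass, heatMass, lintegral_lintegral_swap (by fun_prop)]
  simp_rw [heatKernel_comm n t]

lemma heatMass_add_compl (ht : 0 < t) (A : Set (EuclideanSpace ℝ (Fin n)))
    {E : Set (EuclideanSpace ℝ (Fin n))} (hE : MeasurableSet E) :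
    heatMass n t A E + heatMass n t A Eᶜ = volume A := by
  rw [heatMass, heatMass, ← lintegral_add_left (by fun_prop)]
  simp_rw [lintegral_add_compl _ hE, lintegral_heatKernel ht, setLIntegral_one]

lemma heatMass_inter_add_inter_compl (A B : Set (EuclideanSpace ℝ (Fin n)))
    {Ω : Set (EuclideanSpace ℝ (Fin n))} (hΩ : MeasurableSet Ω) :
    heatMass n t A (B ∩ Ω) + heatMass n t A (B ∩ Ωᶜ) = heatMass n t A B := by
  rw [heatMass, heatMass, ← lintegral_add_left (by fun_prop)]
  simp_rw [← Set.sdiff_eq, lintegral_inter_add_sdiff _ _ hΩ]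
  rfl

lemma heatMass_le (hn : 1 ≤ n) (ht : 1 ≤ t) (A B : Set (EuclideanSpace ℝ (Fin n))) :
    heatMass n t A B ≤ volume A * volume B * ENNReal.ofReal (√t)⁻¹ :=
  (lintegral_mono fun x => setLIntegral_heatKernel_le hn ht x B).trans_eq
    (by rw [setLIntegral_const, mul_comm, mul_assoc])

end HeatMass

section Lfun

variable {n : ℕ} {s : ℝ}

lemma Lfun_eq_heatMass (n : ℕ) (s : ℝ) (A B : Set (EuclideanSpace ℝ (Fin n))) :
    Lfun n s A B = ∫⁻ t in Ioi 0, ENNReal.ofReal (t ^ (-(1 + s))) * heatMass n t A B := rfl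

lemma Lfun_comm (n : ℕ) (s : ℝ) (A B : Set (EuclideanSpace ℝ (Fin n))) :
    Lfun n s A B = Lfun n s B A := by
  simp_rw [Lfun_eq_heatMass, heatMass_comm n _ A B]

lemma Lfun_inter_add_inter_compl (A B : Set (EuclideanSpace ℝ (Fin n)))
    {Ω : Set (EuclideanSpace ℝ (Fin n))} (hΩ : MeasurableSet Ω) :
    Lfun n s A (B ∩ Ω) + Lfun n s A (B ∩ Ωᶜ) = Lfun n s A B := by
  simp_rw [Lfun_eq_heatMass]
  rw [← lintegral_add_left (by have := measurable_heatMass A (B ∩ Ω); fun_prop)]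
  simp_rw [← mul_add, heatMass_inter_add_inter_compl A B hΩ]

lemma ofReal_mul_Lfun_eq_add_tailMean (n : ℕ) (s : ℝ) (A B : Set (EuclideanSpace ℝ (Fin n))) :
    ENNReal.ofReal s * Lfun n s A B =
      ENNReal.ofReal s * (∫⁻ t in Ioc 0 1, ENNReal.ofReal (t ^ (-(1 + s))) * heatMass n t A B) +
        tailMean (fun t => heatMass n t A B) s := by
  rw [tailMean, ← mul_add, Lfun_eq_heatMass, ← Ioc_union_Ioi_eq_Ioi zero_le_one,
    lintegral_union measurableSet_Ioi Ioc_disjoint_Ioi_same]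

lemma tendsto_mul_setLIntegral_Ioc_zero_one {D : ℝ → ℝ≥0∞} {s₀ : ℝ} (hs₀ : 0 < s₀)
    (hfin : ∫⁻ t in Ioc 0 1, ENNReal.ofReal (t ^ (-(1 + s₀))) * D t ≠ ⊤) :
    Tendsto (fun s => ENNReal.ofReal s * ∫⁻ t in Ioc 0 1, ENNReal.ofReal (t ^ (-(1 + s))) * D t)
      (𝓝[>] 0) (𝓝 0) := by
  have hbound : Tendsto (fun s => ENNReal.ofReal s *
      ∫⁻ t in Ioc 0 1, ENNReal.ofReal (t ^ (-(1 + s₀))) * D t) (𝓝[>] 0) (𝓝 0) := by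
    have h0 : Tendsto (fun s : ℝ => ENNReal.ofReal s) (𝓝[>] 0) (𝓝 0) := by
      simpa using tendsto_nhdsWithin_of_tendsto_nhds (ENNReal.continuous_ofReal.tendsto 0)
    simpa using ENNReal.Tendsto.mul_const h0 (Or.inr hfin)
  refine tendsto_of_tendsto_of_tendsto_of_le_of_le' tendsto_const_nhds hbound
    (Eventually.of_forall fun _ => bot_le) ?_
  filter_upwards [Ioc_mem_nhdsGT hs₀] with s hs
  gcongr ENNReal.ofReal s * ?_
  refine setLIntegral_mono' measurableSet_Ioc fun t ht => mul_le_mul_left ?_ _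
  exact ENNReal.ofReal_le_ofReal (Real.rpow_le_rpow_of_exponent_ge ht.1 ht.2 (by linarith [hs.2]))

lemma tendsto_mul_Lfun {A B : Set (EuclideanSpace ℝ (Fin n))} {s₀ : ℝ} {L : ℝ≥0∞} (hs₀ : 0 < s₀)
    (hfin : Lfun n s₀ A B ≠ ⊤) (hL : Tendsto (tailMean fun t => heatMass n t A B) (𝓝[>] 0) (𝓝 L)) :
    Tendsto (fun s => ENNReal.ofReal s * Lfun n s A B) (𝓝[>] 0) (𝓝 L) := by
  have hhead : ∫⁻ t in Ioc 0 1, ENNReal.ofReal (t ^ (-(1 + s₀))) * heatMass n t A B ≠ ⊤ :=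
    ne_top_of_le_ne_top hfin <| by
      rw [Lfun_eq_heatMass, ← Ioc_union_Ioi_eq_Ioi zero_le_one]
      exact lintegral_mono_set subset_union_left
  simp_rw [ofReal_mul_Lfun_eq_add_tailMean]
  simpa using (tendsto_mul_setLIntegral_Ioc_zero_one hs₀ hhead).add hL

end Lfun

section Asymptotics

variable {n : ℕ} {E : Set (EuclideanSpace ℝ (Fin n))} {x : EuclideanSpace ℝ (Fin n)} {r : ℝ}
  {Ξ : ℝ≥0∞}

lemma tendsto_tailMean_setLIntegral_heatKernel (hn : 1 ≤ n)
    (hΞ : Tendsto (fun s => ENNReal.ofReal s * LambdaE n E x r s) (𝓝[>] 0) (𝓝 Ξ))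
    (x' : EuclideanSpace ℝ (Fin n)) :
    Tendsto (tailMean fun t => ∫⁻ y in E, ENNReal.ofReal (heatKernel n t x' y)) (𝓝[>] 0) (𝓝 Ξ) := by
  set C := ENNReal.ofReal (‖x - x'‖ * (2 ^ ((n : ℝ) / 2) * √2 + ‖x - x'‖))
  refine tendsto_tailMean_of_le_add (C := C + volume (Metric.ball x r))
    (g := fun t => ∫⁻ y in E \ Metric.ball x r, ENNReal.ofReal (heatKernel n t x y))
    (by finiteness) hΞ (fun t ht => ?_) (fun t ht => ?_)
  · calc ∫⁻ y in E, ENNReal.ofReal (heatKernel n t x' y)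
        ≤ (∫⁻ y in E, ENNReal.ofReal (heatKernel n t x y)) + C * ENNReal.ofReal (√t)⁻¹ :=
          setLIntegral_heatKernel_le_add ht.le x x' E
      _ = (∫⁻ y in E ∩ Metric.ball x r, ENNReal.ofReal (heatKernel n t x y)) +
            (∫⁻ y in E \ Metric.ball x r, ENNReal.ofReal (heatKernel n t x y)) +
              C * ENNReal.ofReal (√t)⁻¹ := by
          rw [lintegral_inter_add_sdiff _ _ measurableSet_ball]
      _ ≤ volume (Metric.ball x r) * ENNReal.ofReal (√t)⁻¹ +
            (∫⁻ y in E \ Metric.ball x r, ENNReal.ofReal (heatKernel n t x y)) +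
              C * ENNReal.ofReal (√t)⁻¹ := by
          gcongr
          exact (setLIntegral_heatKernel_le hn ht.le x _).trans
            (by gcongr; exact inter_subset_right)
      _ = _ := by ring
  · calc ∫⁻ y in E \ Metric.ball x r, ENNReal.ofReal (heatKernel n t x y)
        ≤ ∫⁻ y in E, ENNReal.ofReal (heatKernel n t x y) := lintegral_mono_set sdiff_subset
      _ ≤ (∫⁻ y in E, ENNReal.ofReal (heatKernel n t x' y)) + C * ENNReal.ofReal (√t)⁻¹ := by
          simpa only [C, norm_sub_rev x'] using setLIntegral_heatKernel_le_add ht.le x' x E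
      _ ≤ _ := by gcongr; exact le_self_add

lemma tendsto_tailMean_heatMass (hn : 1 ≤ n)
    (hΞ : Tendsto (fun s => ENNReal.ofReal s * LambdaE n E x r s) (𝓝[>] 0) (𝓝 Ξ))
    {W : Set (EuclideanSpace ℝ (Fin n))} (hW : volume W ≠ ⊤) :
    Tendsto (tailMean fun t => heatMass n t W E) (𝓝[>] 0) (𝓝 (Ξ * volume W)) := by
  have hmeas : ∀ s : ℝ, Measurable fun q : EuclideanSpace ℝ (Fin n) × ℝ =>
      ENNReal.ofReal (q.2 ^ (-(1 + s))) * ∫⁻ y in E, ENNReal.ofReal (heatKernel n q.2 q.1 y) := by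
    fun_prop
  have hswap : ∀ s, tailMean (fun t => heatMass n t W E) s =
      ∫⁻ x' in W, tailMean (fun t => ∫⁻ y in E, ENNReal.ofReal (heatKernel n t x' y)) s := by
    intro s
    simp only [tailMean, heatMass]
    rw [lintegral_const_mul _ (Measurable.lintegral_prod_right' (hmeas s))]
    congr 1
    have hin : ∀ t : ℝ, ENNReal.ofReal (t ^ (-(1 + s))) *
        ∫⁻ x' in W, ∫⁻ y in E, ENNReal.ofReal (heatKernel n t x' y) =
        ∫⁻ x' in W, ENNReal.ofReal (t ^ (-(1 + s))) *
          ∫⁻ y in E, ENNReal.ofReal (heatKernel n t x' y) :=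
      fun t => (lintegral_const_mul _ (by fun_prop)).symm
    simp_rw [hin]
    exact lintegral_lintegral_swap (by fun_prop)
  refine Tendsto.congr (fun s => (hswap s).symm) ?_
  rw [← setLIntegral_const]
  refine tendsto_lintegral_filter_of_dominated_convergence (fun _ => 1)
    (Eventually.of_forall fun s => (Measurable.lintegral_prod_right' (hmeas s)).const_mul _) ?_
    (by simpa using hW) (ae_of_all _ fun x' => tendsto_tailMean_setLIntegral_heatKernel hn hΞ x')
  filter_upwards [self_mem_nhdsWithin] with s (hs : 0 < s)
  refine ae_of_all _ fun x' => (tailMean_mono fun t ht => ?_).trans_eq (tailMean_const hs 1)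
  exact (setLIntegral_le_lintegral _ _).trans_eq (lintegral_heatKernel (by linarith) x')

lemma tendsto_tailMean_heatMass_compl (hn : 1 ≤ n) (hE : MeasurableSet E)
    (hΞ : Tendsto (fun s => ENNReal.ofReal s * LambdaE n E x r s) (𝓝[>] 0) (𝓝 Ξ))
    {A : Set (EuclideanSpace ℝ (Fin n))} (hA : volume A ≠ ⊤) :
    Tendsto (tailMean fun t => heatMass n t A Eᶜ) (𝓝[>] 0) (𝓝 ((1 - Ξ) * volume A)) := by
  have hsum : ∀ s, 0 < s →
      tailMean (fun t => heatMass n t A E) s + tailMean (fun t => heatMass n t A Eᶜ) s =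
        volume A := fun s hs => by
    rw [← tailMean_add (measurable_heatMass A Eᶜ), ← tailMean_const hs (volume A)]
    exact tailMean_congr fun t ht => heatMass_add_compl (by linarith) A hE
  rw [ENNReal.sub_mul fun _ _ => hA, one_mul]
  refine (ENNReal.Tendsto.sub tendsto_const_nhds (tendsto_tailMean_heatMass hn hΞ hA)
    (Or.inl hA)).congr' (eventually_nhdsWithin_of_forall fun s (hs : 0 < s) => ?_)
  refine (ENNReal.eq_sub_of_add_eq ?_ ((add_comm _ _).trans (hsum s hs))).symm
  exact ne_top_of_le_ne_top hA ((le_self_add).trans_eq (hsum s hs))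

lemma tendsto_tailMean_heatMass_inter_compl (hn : 1 ≤ n)
    (hΞ : Tendsto (fun s => ENNReal.ofReal s * LambdaE n E x r s) (𝓝[>] 0) (𝓝 Ξ))
    {Ω W : Set (EuclideanSpace ℝ (Fin n))} (hΩ : MeasurableSet Ω) (hΩfin : volume Ω ≠ ⊤)
    (hW : volume W ≠ ⊤) :
    Tendsto (tailMean fun t => heatMass n t W (E ∩ Ωᶜ)) (𝓝[>] 0) (𝓝 (Ξ * volume W)) := by
  refine tendsto_tailMean_of_le_add (C := volume W * volume Ω) (by finiteness)
    (tendsto_tailMean_heatMass hn hΞ hW) (fun t _ => ?_) (fun t ht => ?_)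
  · rw [← heatMass_inter_add_inter_compl W E hΩ]
    exact le_add_self.trans le_self_add
  · rw [← heatMass_inter_add_inter_compl W E hΩ, add_comm]
    gcongr
    exact (heatMass_le hn ht.le W _).trans (by gcongr; exact inter_subset_right)

end Asymptotics

theorem statement14_general (n : ℕ) (hn : 1 ≤ n) (Ω : Set (EuclideanSpace ℝ (Fin n)))
    (hΩo : IsOpen Ω) (hΩb : Bornology.IsBounded Ω)
    (E : Set (EuclideanSpace ℝ (Fin n))) (hE : MeasurableSet E)
    (s₀ : ℝ) (hs₀ : s₀ ∈ Set.Ioo (0:ℝ) (1/2)) (hfin : sPer n s₀ E Ω < ⊤)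
    (ΞE : ℝ≥0∞) (x : EuclideanSpace ℝ (Fin n)) (r : ℝ)
    (hΞ : Tendsto (fun s : ℝ => ENNReal.ofReal s * LambdaE n E x r s)
      (𝓝[>] (0:ℝ)) (𝓝 ΞE)) :
    Tendsto (fun s : ℝ => ENNReal.ofReal s * sPer n s E Ω) (𝓝[>] (0:ℝ))
      (𝓝 (2 * ((1 - ΞE) * volume (E ∩ Ω) + ΞE * volume (Eᶜ ∩ Ω)))) := by
  have hΩ : MeasurableSet Ω := hΩo.measurableSet
  have hΩfin : volume Ω ≠ ⊤ := hΩb.measure_lt_top.ne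
  have hsPer : ∀ s, sPer n s E Ω = 2 * (Lfun n s (E ∩ Ω) Eᶜ + Lfun n s (Eᶜ ∩ Ω) (E ∩ Ωᶜ)) :=
    fun s => by rw [sPer, Lfun_inter_add_inter_compl _ _ hΩ, Lfun_comm n s (E ∩ Ωᶜ)]
  rw [hsPer] at hfin
  obtain ⟨hfin₁, hfin₂⟩ :=
    ENNReal.add_lt_top.1 (ENNReal.lt_top_of_mul_ne_top_right hfin.ne two_ne_zero)
  have hinside := tendsto_mul_Lfun hs₀.1 hfin₁.ne (tendsto_tailMean_heatMass_compl hn hE hΞ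
    (ne_top_of_le_ne_top hΩfin (measure_mono inter_subset_right)))
  have hacross := tendsto_mul_Lfun hs₀.1 hfin₂.ne (tendsto_tailMean_heatMass_inter_compl hn hΞ hΩ
    hΩfin (ne_top_of_le_ne_top hΩfin (measure_mono inter_subset_right)))
  refine (ENNReal.Tendsto.const_mul (hinside.add hacross) (Or.inr ENNReal.ofNat_ne_top)).congr
    fun s => ?_
  rw [hsPer, mul_left_comm, mul_add (ENNReal.ofReal s)]

/-- for `Ω` open and bounded, `E` measurable with `Per_{s₀}(E,Ω) < ∞` for some
`s₀ ∈ (0,1/2)`, if `Ξ_E = lim_{s→0⁺} s Λ_E(x,r,s)` exists, then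
`lim_{s→0⁺} s Per_s(E,Ω) = 2[(1−Ξ_E) 𝓛ⁿ(E∩Ω) + Ξ_E 𝓛ⁿ(Eᶜ∩Ω)]`. -/
theorem statement14 (n : ℕ) (hn : 1 ≤ n) (Ω : Set (EuclideanSpace ℝ (Fin n)))
    (hΩo : IsOpen Ω) (hΩb : Bornology.IsBounded Ω)
    (E : Set (EuclideanSpace ℝ (Fin n))) (hE : MeasurableSet E)
    (s₀ : ℝ) (hs₀ : s₀ ∈ Set.Ioo (0:ℝ) (1/2)) (hfin : sPer n s₀ E Ω < ⊤)
    (ΞE : ℝ≥0∞) (x : EuclideanSpace ℝ (Fin n)) (r : ℝ) (hr : 0 < r)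
    (hΞ : Tendsto (fun s : ℝ => ENNReal.ofReal s * LambdaE n E x r s)
      (𝓝[>] (0:ℝ)) (𝓝 ΞE)) :
    Tendsto (fun s : ℝ => ENNReal.ofReal s * sPer n s E Ω) (𝓝[>] (0:ℝ))
      (𝓝 (2 * ((1 - ΞE) * volume (E ∩ Ω) + ΞE * volume (Eᶜ ∩ Ω)))) :=
  statement14_general n hn Ω hΩo hΩb E hE s₀ hs₀ hfin ΞE x r hΞ
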